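/- arXiv:1609.05025 — 4 statements merged into one kernel-verified Lean document; each statement's English description precedes it below -/
import Mathlib

section
/- Let p be an odd positive integer, q an integer relatively prime to p, and q* a positive integer with q·q* ≡ 1 (mod p). Let ℓ be a positive even integer and let t be a complex p-th root of unity. Then t^q ≠ −1 and (t^q − 1)·(t^ℓ − 1)/(t^q + 1) = t^ℓ + 1 + 2·Σ_{j=1}^{q*ℓ−1} (−1)^j · t^{qj}. -/
open Finset

lemma telescope_aux (s : ℂ) : ∀ N : ℕ, 1 ≤ N →
    (s + 1) * ∑ j ∈ Finset.Icc 1 (N - 1), (-1 : ℂ) ^ j * s ^ j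
      = -((-1) ^ N * s ^ N) - s := by
  intro N hN
  induction N, hN using Nat.le_induction with
  | base => simp
  | succ n hn ih =>
    have h : n = (n - 1) + 1 := (Nat.succ_pred_eq_of_pos hn).symm
    rw [Nat.add_sub_cancel, h, Finset.sum_Icc_succ_top (by omega), mul_add, ← h, ih]
    ring

theorem root_of_unity_alternating_identity (p : ℕ) (hp : 0 < p) (hodd : Odd p)
    (q : ℤ) (hpq : IsCoprime q (p : ℤ))
    (qstar : ℕ) (hqstar : 0 < qstar) (hinv : q * (qstar : ℤ) ≡ 1 [ZMOD p])
    (l : ℕ) (hl : 0 < l) (hle : Even l)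
    (t : ℂ) (ht : t ^ p = 1) :
    t ^ (q : ℤ) ≠ -1 ∧
      (t ^ (q : ℤ) - 1) * (t ^ l - 1) / (t ^ (q : ℤ) + 1) =
        t ^ l + 1 + 2 * ∑ j ∈ Finset.Icc 1 (qstar * l - 1), (-1) ^ j * t ^ (q * (j : ℤ)) := by
  have ht0 : t ≠ 0 := by
    intro h
    rw [h, zero_pow hp.ne'] at ht
    exact zero_ne_one ht
  set s := t ^ (q : ℤ) with hs
  have hsp : s ^ p = 1 := by
    rw [hs, ← zpow_natCast, ← zpow_mul, mul_comm, zpow_mul, zpow_natCast, ht, one_zpow]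
  have hne : s ≠ -1 := by
    intro h
    rw [h, hodd.neg_one_pow] at hsp
    norm_num at hsp
  have hs1 : s + 1 ≠ 0 := fun h => hne (by linear_combination h)
  -- key : t ^ (q * qstar) = t
  obtain ⟨k, hk⟩ : (p : ℤ) ∣ q * (qstar : ℤ) - 1 := Int.ModEq.dvd hinv.symm
  have hkey : t ^ (q * (qstar : ℤ)) = t := by
    have : q * (qstar : ℤ) = 1 + (p : ℤ) * k := by linarith
    rw [this, zpow_add₀ ht0, zpow_one, zpow_mul, zpow_natCast, ht, one_zpow, mul_one]
  have hsN : s ^ (qstar * l) = t ^ l := by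
    rw [hs, ← zpow_natCast, ← zpow_mul]
    have h2 : q * ((qstar * l : ℕ) : ℤ) = (q * (qstar : ℤ)) * (l : ℤ) := by push_cast; ring
    rw [h2, zpow_mul, hkey, zpow_natCast]
  have hterm : ∀ j : ℕ, t ^ (q * (j : ℤ)) = s ^ j := fun j => by
    rw [zpow_mul, hs, zpow_natCast]
  have hsum : ∑ j ∈ Finset.Icc 1 (qstar * l - 1), (-1 : ℂ) ^ j * t ^ (q * (j : ℤ))
      = ∑ j ∈ Finset.Icc 1 (qstar * l - 1), (-1 : ℂ) ^ j * s ^ j := by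
    exact Finset.sum_congr rfl fun j _ => by rw [hterm]
  have hN1 : 1 ≤ qstar * l := Nat.one_le_iff_ne_zero.mpr (by positivity)
  have heven : Even (qstar * l) := hle.mul_left qstar
  have key := telescope_aux s (qstar * l) hN1
  rw [heven.neg_one_pow, one_mul, hsN] at key
  refine ⟨hne, ?_⟩
  rw [hsum, div_eq_iff hs1]
  linear_combination -2 * key
end

section
/- Let p be an odd positive integer, q a positive integer relatively prime to p, and q* the unique integer with 1 ≤ q* ≤ p−1 and q·q* ≡ 1 (mod p). Let ℓ be an even integer with 0 < ℓ < p. Then δ^τ(p;q,ℓ) = (1/(2p)) · Σ_{t^p = 1} [ 2·Σ_{i=1}^{ℓ−1} t^{−i} + t^{−ℓ} + 1 ] · [ 2·Σ_{j=1}^{q*ℓ−1} (−1)^j t^{qj} + t^{ℓ} + 1 ], where the outer sum runs over all complex p-th roots of unity t (including t = 1). -/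
open Finset Real Complex Polynomial

/-- The modified Casson–Gordon trigonometric sum
`δ^τ(p;q,ℓ) = (2/p) Σ_{k=1}^{p−1} cot(πk/p) · cot(πqk/p + π/2) · sin²(πkℓ/p)`. -/
noncomputable def deltaTau (p q : ℕ) (l : ℤ) : ℝ :=
  (2 / p) * ∑ k ∈ Finset.Icc 1 (p - 1),
    Real.cot (Real.pi * k / p) * Real.cot (Real.pi * q * k / p + Real.pi / 2) *
      (Real.sin (Real.pi * k * l / p)) ^ 2

/-!
For `s ≠ 1` the bracket `2 ∑_{i=1}^{n-1} s^i + s^n + 1 = (s + 1)(1 + s + ⋯ + s^{n-1})` equals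
`(s + 1)(s^n - 1)/(s - 1)`, and for `s = exp (2iz)` the factor `(s + 1)/(s - 1)` is `-i cot z`.
At `t = exp (2πik/p)` the first bracket is taken at `s = t⁻¹ = exp (-2πik/p)` and the second at
`s = -t^q = exp (2i(πqk/p + π/2))`; since `q q* ≡ 1 (mod p)` and `q*ℓ` is even,
`(-t^q)^(q*ℓ) = t^ℓ`, so the product of the two brackets is
`cot (πk/p) cot (πqk/p + π/2) (t^{-ℓ} - 1)(t^ℓ - 1)`, and `(t^{-ℓ} - 1)(t^ℓ - 1) = 4 sin² (πkℓ/p)`.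
At `t = 1` the second bracket is taken at `s = -1` and vanishes.
-/

section BracketSum

variable {R : Type*} [CommRing R]

def bracketSum (s : R) (n : ℕ) : R := 2 * ∑ i ∈ Icc 1 (n - 1), s ^ i + s ^ n + 1

lemma bracketSum_eq_add_one_mul_geom_sum (s : R) {n : ℕ} (hn : 1 ≤ n) :
    bracketSum s n = (s + 1) * ∑ i ∈ range n, s ^ i := by
  have hgeom : ∑ i ∈ range n, s ^ i = 1 + ∑ i ∈ Icc 1 (n - 1), s ^ i := by
    rw [sum_range_eq_add_Ico _ hn, pow_zero,
      Icc_sub_one_right_eq_Ico_of_not_isMin (by simpa using Nat.one_le_iff_ne_zero.1 hn)]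
  rw [bracketSum]
  linear_combination -geom_sum_mul s n - 2 * hgeom

lemma bracketSum_neg_one {n : ℕ} (hn : 1 ≤ n) : bracketSum (-1 : R) n = 0 := by
  rw [bracketSum_eq_add_one_mul_geom_sum _ hn, neg_add_cancel, zero_mul]

lemma bracketSum_neg_pow (t : R) (q n : ℕ) :
    bracketSum (-t ^ q) n =
      2 * ∑ j ∈ Icc 1 (n - 1), (-1) ^ j * t ^ (q * j) + (-t ^ q) ^ n + 1 := by
  simp only [bracketSum, neg_pow (t ^ q), ← pow_mul]

end BracketSum

lemma bracketSum_inv {K : Type*} [Field K] (t : K) (n : ℕ) :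
    bracketSum t⁻¹ n = 2 * ∑ i ∈ Icc 1 (n - 1), t ^ (-(i : ℤ)) + t ^ (-(n : ℤ)) + 1 := by
  simp only [bracketSum, zpow_neg, zpow_natCast, inv_pow]

lemma neg_pow_pow_mul_eq_pow {M : Type*} [Monoid M] [HasDistribNeg M] {t : M} {p q q' l : ℕ}
    (ht : t ^ p = 1) (hqq' : q * q' ≡ 1 [MOD p]) (hl : Even l) :
    (-t ^ q) ^ (q' * l) = t ^ l := by
  rw [(hl.mul_left q').neg_pow, ← pow_mul, ← mul_assoc, pow_mul, pow_eq_pow_of_modEq hqq' ht,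
    pow_one]

theorem IsPrimitiveRoot.sum_nthRootsFinset_one {R M : Type*} [CommRing R] [IsDomain R]
    [AddCommMonoid M] {ζ : R} {n : ℕ} (hζ : IsPrimitiveRoot ζ n) (f : R → M) :
    ∑ t ∈ nthRootsFinset n (1 : R), f t = ∑ k ∈ range n, f (ζ ^ k) := by
  obtain rfl | hn := n.eq_zero_or_pos
  · simp
  have : NeZero n := ⟨hn.ne'⟩
  refine (sum_nbij (ζ ^ ·) (fun k _ => ?_) hζ.injOn_pow (fun t ht => ?_) fun _ _ => rfl).symm
  · exact (Polynomial.mem_nthRootsFinset hn 1).2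
      (by rw [← pow_mul, mul_comm, pow_mul, hζ.pow_eq_one, one_pow])
  · obtain ⟨k, hk, rfl⟩ := hζ.eq_pow_of_pow_eq_one ((Polynomial.mem_nthRootsFinset hn 1).1 ht)
    exact ⟨k, mem_range.2 hk, rfl⟩

lemma Complex.exp_two_pi_I_div_pow (p k : ℕ) :
    exp (2 * π * I / p) ^ k = exp (2 * I * (π * k / p)) := by
  rw [← Complex.exp_nat_mul]
  ring_nf

lemma Complex.sum_nthRootsFinset_one {M : Type*} [AddCommMonoid M] {p : ℕ} (hp : 0 < p)
    (f : ℂ → M) :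
    ∑ t ∈ nthRootsFinset p (1 : ℂ), f t =
      ∑ k ∈ range p, f (exp (2 * I * (π * k / p))) := by
  simp only [(isPrimitiveRoot_exp p hp.ne').sum_nthRootsFinset_one, exp_two_pi_I_div_pow]

lemma bracketSum_exp (z : ℂ) {n : ℕ} (hn : 1 ≤ n) (hz : exp (2 * I * z) ≠ 1) :
    bracketSum (exp (2 * I * z)) n = -I * cot z * (exp (2 * I * z) ^ n - 1) := by
  have hw : exp (2 * I * z) - 1 ≠ 0 := sub_ne_zero.2 hz
  have hw' : 1 - exp (2 * I * z) ≠ 0 := sub_ne_zero.2 hz.symm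
  rw [cot_eq_exp_ratio, bracketSum_eq_add_one_mul_geom_sum _ hn]
  field_simp
  linear_combination -(1 + exp (2 * I * z)) * geom_sum_mul (exp (2 * I * z)) n

lemma exp_sub_one_mul_exp_neg_sub_one (z : ℂ) :
    (exp (2 * I * z) - 1) * (exp (-(2 * I * z)) - 1) = 4 * sin z ^ 2 := by
  have h1 : exp (2 * I * z) = exp (z * I) ^ 2 := by rw [← Complex.exp_nat_mul]; ring_nf
  have h2 : exp (-(2 * I * z)) = exp (-z * I) ^ 2 := by rw [← Complex.exp_nat_mul]; ring_nf
  have h3 : exp (z * I) * exp (-z * I) = 1 := by rw [← Complex.exp_add]; ring_nf; exact exp_zero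
  rw [Complex.sin, h1, h2]
  linear_combination (exp (z * I) * exp (-z * I) - 1) * h3 +
    (2 * exp (z * I) * exp (-z * I) - exp (z * I) ^ 2 - exp (-z * I) ^ 2) * I_sq

lemma bracketSum_inv_mul_bracketSum_neg_pow (z : ℂ) {q l m : ℕ} (hl : 1 ≤ l) (hm : 1 ≤ m)
    (h1 : exp (2 * I * z) ≠ 1) (hq : exp (2 * I * z) ^ q ≠ -1)
    (hpow : (-exp (2 * I * z) ^ q) ^ m = exp (2 * I * z) ^ l) :
    bracketSum (exp (2 * I * z))⁻¹ l * bracketSum (-exp (2 * I * z) ^ q) m =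
      4 * cot z * cot (q * z + π / 2) * sin (l * z) ^ 2 := by
  have hinv : (exp (2 * I * z))⁻¹ = exp (2 * I * -z) := by rw [← Complex.exp_neg]; ring_nf
  have hneg : -exp (2 * I * z) ^ q = exp (2 * I * (q * z + π / 2)) := by
    rw [mul_add, Complex.exp_add, show 2 * I * (π / 2 : ℂ) = π * I by ring,
      Complex.exp_pi_mul_I, ← Complex.exp_nat_mul]
    ring_nf
  have hpowl : ∀ w : ℂ, exp (2 * I * w) ^ l = exp (2 * I * (l * w)) := fun w => by
    rw [← Complex.exp_nat_mul]; ring_nf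
  have hcot : cot (-z) = -cot z := by
    rw [Complex.cot, Complex.cot, Complex.cos_neg, Complex.sin_neg, div_neg]
  have hq' : -exp (2 * I * z) ^ q ≠ 1 := fun h => hq (neg_eq_iff_eq_neg.1 h)
  rw [hinv, hneg, bracketSum_exp _ hl (hinv ▸ inv_ne_one.2 h1),
    bracketSum_exp _ hm (hneg ▸ hq'),
    ← hneg, hpow, hpowl, hpowl, hcot, show 2 * I * (l * -z) = -(2 * I * (l * z)) by ring]
  linear_combination (cot z * cot (q * z + π / 2)) * exp_sub_one_mul_exp_neg_sub_one (l * z) -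
    (cot z * cot (q * z + π / 2) * (exp (2 * I * (l * z)) - 1) *
      (exp (-(2 * I * (l * z))) - 1)) * I_sq

lemma bracketSum_inv_mul_bracketSum_neg_pow_of_mem_Ico {p q l m k : ℕ} (hodd : Odd p)
    (hk : k ∈ Ico 1 p) (hl : 1 ≤ l) (hm : 1 ≤ m)
    (hpow : ∀ t : ℂ, t ^ p = 1 → (-t ^ q) ^ m = t ^ l) :
    bracketSum (exp (2 * I * (π * k / p)))⁻¹ l *
        bracketSum (-exp (2 * I * (π * k / p)) ^ q) m =
      4 * Complex.cot (π * k / p) * Complex.cot (π * q * k / p + π / 2) *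
        Complex.sin (π * k * l / p) ^ 2 := by
  obtain ⟨hk1, hkp⟩ := mem_Ico.1 hk
  have hζ := isPrimitiveRoot_exp p (by omega)
  have hroot : (exp (2 * I * (π * k / p))) ^ p = 1 := by
    rw [← exp_two_pi_I_div_pow, pow_right_comm, hζ.pow_eq_one, one_pow]
  have hne1 : exp (2 * I * (π * k / p)) ≠ 1 := by
    rw [← exp_two_pi_I_div_pow]
    exact hζ.pow_ne_one_of_pos_of_lt (by omega) hkp
  have hneg1 : exp (2 * I * (π * k / p)) ^ q ≠ -1 := fun h => by
    have := congrArg (· ^ p) h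
    simp only [pow_right_comm _ q p, hroot, one_pow, hodd.neg_one_pow] at this
    norm_num at this
  rw [bracketSum_inv_mul_bracketSum_neg_pow _ hl hm hne1 hneg1 (hpow _ hroot),
    show (q : ℂ) * (π * k / p) = π * q * k / p by ring,
    show (l : ℂ) * (π * k / p) = π * k * l / p by ring]

theorem deltaTau_eq_double_bracket_sum_general (p q : ℕ) (hp : 0 < p)
    (hodd : Odd p)
    (qstar : ℕ) (hq1 : 1 ≤ qstar)
    (hinv : (q : ℤ) * (qstar : ℤ) ≡ 1 [ZMOD p])
    (l : ℕ) (hl0 : 0 < l) (hle : Even l) :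
    (deltaTau p q (l : ℤ) : ℂ) =
      (1 / (2 * (p : ℂ))) *
        ∑ t ∈ Polynomial.nthRootsFinset p (1 : ℂ),
          (2 * ∑ i ∈ Finset.Icc 1 (l - 1), t ^ (-(i : ℤ)) + t ^ (-(l : ℤ)) + 1) *
            (2 * ∑ j ∈ Finset.Icc 1 (qstar * l - 1), (-1) ^ j * t ^ (q * j) + t ^ l + 1) := by
  have hm : 1 ≤ qstar * l := Nat.mul_pos hq1 hl0
  have hqq : q * qstar ≡ 1 [MOD p] := Int.natCast_modEq_iff.1 (by exact_mod_cast hinv)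
  have hpow : ∀ t : ℂ, t ^ p = 1 → (-t ^ q) ^ (qstar * l) = t ^ l :=
    fun _ ht => neg_pow_pow_mul_eq_pow ht hqq hle
  have hbrackets : ∀ t ∈ nthRootsFinset p (1 : ℂ),
      (2 * ∑ i ∈ Icc 1 (l - 1), t ^ (-(i : ℤ)) + t ^ (-(l : ℤ)) + 1) *
        (2 * ∑ j ∈ Icc 1 (qstar * l - 1), (-1) ^ j * t ^ (q * j) + t ^ l + 1) =
      bracketSum t⁻¹ l * bracketSum (-t ^ q) (qstar * l) := fun t ht => by
    rw [bracketSum_inv, bracketSum_neg_pow, hpow t ((mem_nthRootsFinset hp 1).1 ht)]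
  rw [sum_congr rfl hbrackets, Complex.sum_nthRootsFinset_one hp, sum_range_eq_add_Ico _ hp]
  simp only [Nat.cast_zero, mul_zero, zero_div, Complex.exp_zero, one_pow]
  rw [bracketSum_neg_one hm, mul_zero, zero_add,
    sum_congr rfl fun k hk =>
      bracketSum_inv_mul_bracketSum_neg_pow_of_mem_Ico hodd hk hl0 hm hpow,
    deltaTau, ← Icc_sub_one_right_eq_Ico_of_not_isMin (by simpa using hp.ne')]
  push_cast
  rw [mul_sum, mul_sum]
  refine sum_congr rfl fun k _ => ?_
  field_simp
  ring

theorem deltaTau_eq_double_bracket_sum (p q : ℕ) (hp : 0 < p) (hq : 0 < q)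
    (hodd : Odd p) (hpq : Nat.Coprime p q)
    (qstar : ℕ) (hq1 : 1 ≤ qstar) (hq2 : qstar ≤ p - 1)
    (hinv : (q : ℤ) * (qstar : ℤ) ≡ 1 [ZMOD p])
    (l : ℕ) (hl0 : 0 < l) (hlp : l < p) (hle : Even l) :
    (deltaTau p q (l : ℤ) : ℂ) =
      (1 / (2 * (p : ℂ))) *
        ∑ t ∈ Polynomial.nthRootsFinset p (1 : ℂ),
          (2 * ∑ i ∈ Finset.Icc 1 (l - 1), t ^ (-(i : ℤ)) + t ^ (-(l : ℤ)) + 1) *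
            (2 * ∑ j ∈ Finset.Icc 1 (qstar * l - 1), (-1) ^ j * t ^ (q * j) + t ^ l + 1) :=
  deltaTau_eq_double_bracket_sum_general p q hp hodd qstar hq1 hinv l hl0 hle
end

section
/- Let p be an odd positive integer, q a positive integer relatively prime to p, and let ℓ be an even integer with 0 < ℓ < p. Then the real number δ^τ(p;q,ℓ) is an odd integer; that is, there exists an integer m with δ^τ(p;q,ℓ) = 2m + 1. -/
/-!
Since `cot (x + π/2) = -tan x` and `cot x * sin (ℓ x) ^ 2 = ∑_{m<ℓ} sin (2 m x) + sin (2 ℓ x) / 2`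
(telescoping), `p δ^τ(p;q,ℓ) = -(2 ∑_{m<ℓ} G m + G ℓ)` with
`G m = tanSinSum p q m = ∑_{k<p} tan (π q k / p) sin (2 π m k / p)`. The substitution `k ↦ q k`
permutes the residues mod `p`, so `G m` is the same sum with `q = 1` at a frequency `n` with
`q n ≡ m`. For odd `p` (so that `cos (π j / p) ≠ 0`) and `0 < n < p` that sum is
`(-1)^(n+1) p`: expand
`tan x * sin (2 n x) = (-1)^(n-1) (1 + 2 ∑_{0<a<n} (-1)^a cos (2 a x)) - cos (2 n x)`
and sum over `x = π j / p`, where every cosine sum vanishes. Thus `G 0 = 0` and `G m = ±p`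
for `0 < m < p`, so `δ^τ = -(2 s ± 1)` with `s` an integer.
-/

open Finset Real

theorem Function.Periodic.sum_range_comp_mul {M : Type*} [AddCommMonoid M] {f : ℕ → M}
    {p q : ℕ} (hf : Function.Periodic f p) (hpq : p.Coprime q) :
    ∑ k ∈ range p, f (q * k) = ∑ k ∈ range p, f k := by
  rcases p.eq_zero_or_pos with rfl | hp
  · simp
  have hmaps : Set.MapsTo (fun k => q * k % p) (range p) (range p) :=
    fun k _ => mem_range.2 (Nat.mod_lt _ hp)
  have hinj : Set.InjOn (fun k => q * k % p) (range p) := fun a ha b hb hab =>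
    (Nat.ModEq.cancel_left_of_coprime hpq hab).eq_of_lt_of_lt (mem_range.1 ha) (mem_range.1 hb)
  exact sum_nbij _ hmaps hinj (surjOn_of_injOn_of_card_le _ hmaps hinj le_rfl)
    fun k _ => (hf.map_mod_nat _).symm

theorem exists_mul_modEq_of_coprime {p q m : ℕ} (hpq : p.Coprime q) (hm : 0 < m) (hmp : m < p) :
    ∃ n, 0 < n ∧ n < p ∧ q * n ≡ m [MOD p] := by
  have : NeZero p := ⟨by omega⟩
  set x : ZMod p := ((ZMod.unitOfCoprime q hpq.symm)⁻¹ : (ZMod p)ˣ) * m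
  have hqx : (q : ZMod p) * x = m := by
    rw [← ZMod.coe_unitOfCoprime q hpq.symm, Units.mul_inv_cancel_left]
  refine ⟨x.val, Nat.pos_of_ne_zero fun h0 => ?_, ZMod.val_lt x, ?_⟩
  · rw [ZMod.val_eq_zero] at h0
    rw [h0, mul_zero, eq_comm, ZMod.natCast_eq_zero_iff] at hqx
    exact Nat.not_dvd_of_pos_of_lt hm hmp hqx
  · rw [← ZMod.natCast_eq_natCast_iff]
    push_cast
    rwa [ZMod.natCast_zmod_val]

theorem Function.Periodic.map_mul_div_of_modEq {α : Type*} {g : ℝ → α} {c : ℝ}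
    (hg : Function.Periodic g c) {p a b : ℕ} (h : a ≡ b [MOD p]) :
    g (c * a / p) = g (c * b / p) := by
  rcases eq_or_ne p 0 with rfl | hp
  · simp
  obtain ⟨t, ht⟩ := Nat.modEq_iff_dvd.1 h
  have hb : (b : ℝ) = a + p * t := by exact_mod_cast (sub_eq_iff_eq_add'.1 ht)
  have hshift : c * b / p = c * a / p + t * c := by
    rw [hb]
    field_simp
  rw [hshift, hg.int_mul]

theorem sum_range_cos_two_pi_mul_div_eq_zero {p n : ℕ} (hn : ¬ p ∣ n) :
    ∑ j ∈ range p, cos (2 * π * n * j / p) = 0 := by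
  rcases eq_or_ne p 0 with rfl | hp
  · simp
  have hζ := Complex.isPrimitiveRoot_exp p hp
  set z := Complex.exp (2 * π * Complex.I / p) ^ n
  have hz1 : z ≠ 1 := fun h => hn ((hζ.pow_eq_one_iff_dvd n).1 h)
  have hzp : z ^ p = 1 := by rw [pow_right_comm, hζ.pow_eq_one, one_pow]
  have hre : ∀ j : ℕ, cos (2 * π * n * j / p) = (z ^ j).re := fun j => by
    rw [← pow_mul, ← Complex.exp_nat_mul, ← Complex.exp_ofReal_mul_I_re]
    push_cast
    ring_nf
  simp_rw [hre, ← Complex.re_sum, geom_sum_eq hz1, hzp, sub_self, zero_div, Complex.zero_re]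

theorem cos_pi_mul_div_ne_zero_of_odd {p : ℕ} (hp : Odd p) (j : ℕ) : cos (π * j / p) ≠ 0 := by
  rw [Ne, cos_eq_zero_iff]
  rintro ⟨k, hk⟩
  have hp0 : (p : ℝ) ≠ 0 := Nat.cast_ne_zero.2 hp.pos.ne'
  have hreal : (2 * j : ℝ) = (2 * k + 1) * p := by
    field_simp at hk
    nlinarith [pi_pos]
  have hint : (2 * j : ℤ) = (2 * k + 1) * p := by exact_mod_cast hreal
  have hodd : Odd ((2 * k + 1) * (p : ℤ)) := (odd_two_mul_add_one k).mul hp.natCast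
  rw [← hint] at hodd
  exact Int.not_even_iff_odd.2 hodd (even_two_mul _)

theorem tan_mul_sin_two_mul_succ {x : ℝ} (hx : cos x ≠ 0) (n : ℕ) :
    tan x * sin (2 * (n + 1) * x) =
      (-1) ^ n * (1 + 2 * ∑ a ∈ range n, (-1) ^ (a + 1) * cos (2 * (a + 1) * x))
        - cos (2 * (n + 1) * x) := by
  induction n with
  | zero =>
    rw [tan_eq_sin_div_cos]
    field_simp
    simp only [CharP.cast_eq_zero, zero_add, mul_one, sin_two_mul, cos_two_mul]
    linear_combination 2 * cos x * sin_sq_add_cos_sq x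
  | succ n ih =>
    have hstep : ∀ A, tan x * sin (A + 2 * x) = cos A - cos (A + 2 * x) - tan x * sin A := by
      intro A
      rw [tan_eq_sin_div_cos, sin_add, cos_add, sin_two_mul, cos_two_mul]
      field_simp
      linear_combination (2 * cos A * cos x) * sin_sq_add_cos_sq x
    have hA : 2 * ((n + 1 : ℕ) + 1) * x = 2 * (n + 1) * x + 2 * x := by push_cast; ring
    have hsq : ((-1 : ℝ) ^ n) ^ 2 = 1 := by rw [← pow_mul, pow_mul', neg_one_sq, one_pow]
    rw [hA, hstep, ih, sum_range_succ, pow_succ]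
    linear_combination (-2 * cos (2 * (n + 1) * x)) * hsq

theorem cot_mul_sin_sq (x : ℝ) (l : ℕ) :
    cot x * sin (l * x) ^ 2 = ∑ m ∈ range l, sin (2 * m * x) + sin (2 * l * x) / 2 := by
  by_cases hx : sin x = 0
  · obtain ⟨k, rfl⟩ := sin_eq_zero_iff.1 hx
    have hsin : ∀ m : ℕ, sin (2 * m * (k * π)) = 0 := fun m => by
      simpa [mul_assoc] using sin_int_mul_pi (2 * m * k)
    simp [cot_eq_cos_div_sin, hx, hsin]
  induction l with
  | zero => simp
  | succ l ih =>
    have hstep : ∀ a,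
        cot x * (sin (a + x) ^ 2 - sin a ^ 2) = (sin (2 * a) + sin (2 * (a + x))) / 2 := by
      intro a
      rw [cot_eq_cos_div_sin, sin_two_mul, sin_two_mul, sin_add, cos_add]
      field_simp
      linear_combination (cos x * sin a ^ 2 + sin x * sin a * cos a) * sin_sq_add_cos_sq x
    have h := hstep (l * x)
    rw [← mul_assoc] at h
    rw [sum_range_succ]
    push_cast
    rw [show ((l : ℝ) + 1) * x = l * x + x by ring,
      show 2 * ((l : ℝ) + 1) * x = 2 * (l * x + x) by ring]
    linear_combination ih + h

noncomputable def tanSinSum (p q m : ℕ) : ℝ :=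
  ∑ k ∈ range p, tan (π * q * k / p) * sin (2 * π * m * k / p)

theorem tanSinSum_one {p n : ℕ} (hp : Odd p) (hn : 0 < n) (hnp : n < p) :
    tanSinSum p 1 n = (-1) ^ (n + 1) * p := by
  obtain ⟨n, rfl⟩ : ∃ m, n = m + 1 := ⟨n - 1, by omega⟩
  have hcos : ∀ a ≤ n, ∑ j ∈ range p, cos (2 * ((a : ℝ) + 1) * (π * j / p)) = 0 := fun a ha => by
    have := sum_range_cos_two_pi_mul_div_eq_zero (p := p) (n := a + 1)
      (Nat.not_dvd_of_pos_of_lt (by omega) (by omega))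
    push_cast at this
    rw [← this]
    exact sum_congr rfl fun j _ => by ring_nf
  have hterm : ∀ j ∈ range p, tan (π * (1 : ℕ) * j / p) * sin (2 * π * (n + 1 : ℕ) * j / p) =
      (-1) ^ n * (1 + 2 * ∑ a ∈ range n, (-1) ^ (a + 1) * cos (2 * (a + 1) * (π * j / p)))
        - cos (2 * (n + 1) * (π * j / p)) := fun j _ => by
    rw [← tan_mul_sin_two_mul_succ (cos_pi_mul_div_ne_zero_of_odd hp j)]
    push_cast
    ring_nf
  have hdouble : ∑ j ∈ range p, ∑ a ∈ range n, (-1) ^ (a + 1) * cos (2 * (a + 1) * (π * j / p))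
      = 0 := by
    rw [sum_comm]
    exact sum_eq_zero fun a ha => by rw [← mul_sum, hcos a (mem_range.1 ha).le, mul_zero]
  rw [tanSinSum, sum_congr rfl hterm, sum_sub_distrib, ← mul_sum, sum_add_distrib, ← mul_sum,
    hdouble, hcos n le_rfl]
  simp [pow_succ]

theorem tanSinSum_eq_of_modEq {p q m n : ℕ} (hpq : p.Coprime q) (h : q * n ≡ m [MOD p]) :
    tanSinSum p q m = tanSinSum p 1 n := by
  set f : ℕ → ℝ := fun k => tan (π * (1 : ℕ) * k / p) * sin (2 * π * n * k / p)
  have hsin : ∀ {a b : ℕ}, a ≡ b [MOD p] → sin (2 * π * a / p) = sin (2 * π * b / p) :=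
    sin_periodic.map_mul_div_of_modEq
  have hf : Function.Periodic f p := fun k => by
    simp only [f, Nat.cast_one, mul_one, mul_assoc (2 * π), ← Nat.cast_mul]
    rw [tan_periodic.map_mul_div_of_modEq Nat.add_modEq_right,
      hsin (Nat.ModEq.mul_left n Nat.add_modEq_right)]
  have hterm : ∀ k : ℕ, tan (π * q * k / p) * sin (2 * π * m * k / p) = f (q * k) := fun k => by
    simp only [f, Nat.cast_one, mul_one, mul_assoc (2 * π), mul_assoc π, ← Nat.cast_mul]
    rw [hsin ((h.mul_right k).symm.trans (by rw [mul_comm q n, mul_assoc]))]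
  simp only [tanSinSum, hterm]
  exact hf.sum_range_comp_mul hpq

theorem exists_odd_tanSinSum_eq {p q m : ℕ} (hp : Odd p) (hpq : p.Coprime q) (hm : 0 < m)
    (hmp : m < p) : ∃ e : ℤ, Odd e ∧ tanSinSum p q m = e * p := by
  obtain ⟨n, hn, hnp, hqn⟩ := exists_mul_modEq_of_coprime hpq hm hmp
  refine ⟨(-1) ^ (n + 1), odd_neg_one.pow, ?_⟩
  rw [tanSinSum_eq_of_modEq hpq hqn, tanSinSum_one hp hn hnp]
  push_cast
  rfl

theorem tanSinSum_mem_zmultiples {p q m : ℕ} (hp : Odd p) (hpq : p.Coprime q) (hmp : m < p) :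
    tanSinSum p q m ∈ AddSubgroup.zmultiples (p : ℝ) := by
  rcases Nat.eq_zero_or_pos m with rfl | hm
  · simp [tanSinSum]
  obtain ⟨e, -, he⟩ := exists_odd_tanSinSum_eq hp hpq hm hmp
  exact ⟨e, (zsmul_eq_mul _ _).trans he.symm⟩

theorem deltaTau_eq (p q l : ℕ) :
    deltaTau p q l = -(2 * ∑ m ∈ range l, tanSinSum p q m + tanSinSum p q l) / p := by
  have hrange : ∑ k ∈ Icc 1 (p - 1),
      cot (π * k / p) * cot (π * q * k / p + π / 2) * sin (π * k * (l : ℤ) / p) ^ 2 =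
      ∑ k ∈ range p,
        cot (π * k / p) * cot (π * q * k / p + π / 2) * sin (π * k * (l : ℤ) / p) ^ 2 := by
    refine sum_subset (fun k hk => by simp at hk ⊢; omega) fun k hk hk' => ?_
    obtain rfl : k = 0 := by simp at hk hk'; omega
    simp
  have hterm : ∀ k ∈ range p,
      cot (π * k / p) * cot (π * q * k / p + π / 2) * sin (π * k * (l : ℤ) / p) ^ 2 =
      -(∑ m ∈ range l, tan (π * q * k / p) * sin (2 * π * m * k / p)
        + tan (π * q * k / p) * sin (2 * π * l * k / p) / 2) := fun k _ => by
    have hx : sin (π * k * (l : ℤ) / p) = sin (l * (π * k / p)) := by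
      push_cast
      ring_nf
    rw [cot_eq_cos_div_sin (_ + _), cos_add_pi_div_two, sin_add_pi_div_two, neg_div,
      ← tan_eq_sin_div_cos, hx, mul_right_comm, cot_mul_sin_sq]
    simp only [add_mul, sum_mul,
      fun m : ℝ => show 2 * m * (π * k / p) = 2 * π * m * k / p by ring]
    rw [neg_add, ← sum_neg_distrib]
    congr 1
    · exact sum_congr rfl fun m _ => by ring
    · ring
  rw [deltaTau, hrange, sum_congr rfl hterm, sum_neg_distrib, sum_add_distrib, sum_comm,
    ← sum_div]
  simp only [tanSinSum]
  ring

theorem deltaTau_is_odd_integer_general (p q : ℕ)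
    (hodd : Odd p) (hpq : Nat.Coprime p q)
    (l : ℕ) (hl0 : 0 < l) (hlp : l < p) :
    ∃ m : ℤ, deltaTau p q (l : ℤ) = 2 * m + 1 := by
  obtain ⟨s, hs⟩ := AddSubgroup.mem_zmultiples_iff.1 <|
    (AddSubgroup.zmultiples (p : ℝ)).sum_mem fun m hm =>
      tanSinSum_mem_zmultiples hodd hpq ((mem_range.1 hm).trans hlp)
  obtain ⟨e, ⟨t, rfl⟩, he⟩ := exists_odd_tanSinSum_eq hodd hpq hl0 hlp
  refine ⟨-s - t - 1, ?_⟩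
  have hp : (p : ℝ) ≠ 0 := Nat.cast_ne_zero.2 hodd.pos.ne'
  rw [deltaTau_eq, ← hs, he, zsmul_eq_mul]
  field_simp
  push_cast
  ring

theorem deltaTau_is_odd_integer (p q : ℕ) (hp : 0 < p) (hq : 0 < q)
    (hodd : Odd p) (hpq : Nat.Coprime p q)
    (l : ℕ) (hl0 : 0 < l) (hlp : l < p) (hle : Even l) :
    ∃ m : ℤ, deltaTau p q (l : ℤ) = 2 * m + 1 :=
  deltaTau_is_odd_integer_general p q hodd hpq l hl0 hlp
end

section
/- For every positive integer n, (2/(6n+1)) · Σ_{k=1}^{6n} cot(πk/(6n+1)) · cot(π(5n+1)k/(6n+1) + π/2) = 2·( n − 1 + (5n+1)/(6n+1) ). -/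
open Finset Real

/-!
Put `z = e^{2πik/p}`. Then `cot(πk/p) = i(z+1)/(z-1)` and `cot(πbk/p + π/2) = i(w-1)/(w+1)` with
`w = z^b`, and on `p`-th roots of unity both are finite Fourier series:
`(z+1)/(z-1) = (1/p) Σ_r 2p((r/p)) z^r` and, for odd `p`, `(1-w)/(1+w) = Σ_{s=1}^{p-1} (-w)^s`.
Orthogonality of the characters `k ↦ e^{2πikm/p}` collapses the sum over `k` to
`Σ_{s=1}^{p-1} (-1)^s 2p((-bs/p))`. For `p = 6n+1` and `b = 5n+1` we have `-b ≡ n (mod p)`, and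
on the block `s = 6c+1, …, 6c+6` the residue of `ns` is `n(s-6c) - c`, so each of the `n` blocks
contributes `6n` and the cotangent sum equals `6n²`.
-/

/-- `sawtooth x = 2p((x/p))` for Dedekind's sawtooth function `((t)) = t - ⌊t⌋ - 1/2`, `((t)) = 0`
for `t ∈ ℤ`. -/
def sawtooth {p : ℕ} (x : ZMod p) : ℤ := if x = 0 then 0 else 2 * x.val - p

lemma one_sub_mul_sum_range_mul_pow {R : Type*} [CommRing R] (z : R) (n : ℕ) :
    (1 - z) * ∑ r ∈ range n, (r : R) * z ^ r = z * ∑ r ∈ range n, z ^ r - n * z ^ n := by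
  induction n with
  | zero => simp
  | succ n ih =>
    rw [sum_range_succ, sum_range_succ, mul_add, ih]
    push_cast
    ring

lemma ZMod.sum_univ_val_eq_sum_range {M : Type*} [AddCommMonoid M] {p : ℕ} [NeZero p]
    (f : ℕ → M) : ∑ x : ZMod p, f x.val = ∑ r ∈ range p, f r := by
  obtain ⟨m, rfl⟩ := Nat.exists_eq_succ_of_ne_zero (NeZero.ne p)
  exact Fin.sum_univ_eq_sum_range f (m + 1)

lemma one_sub_mul_sum_sawtooth_mul_pow {p : ℕ} [NeZero p] {z : ℂ} (hz : z ^ p = 1) (hz1 : z ≠ 1) :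
    (1 - z) * ∑ x : ZMod p, (sawtooth x : ℂ) * z ^ x.val = -p * (1 + z) := by
  have hgeom : ∑ r ∈ range p, z ^ r = 0 := by
    rw [geom_sum_eq hz1, hz, sub_self, zero_div]
  have hsaw : ∀ x : ZMod p, (sawtooth x : ℂ) * z ^ x.val
      = (2 * x.val - p) * z ^ x.val + if x = 0 then (p : ℂ) else 0 := by
    intro x
    by_cases hx : x = 0 <;> simp [sawtooth, hx]
  simp only [hsaw, sum_add_distrib, ZMod.sum_univ_val_eq_sum_range
    (fun r => (2 * r - p : ℂ) * z ^ r)]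
  have hweighted := one_sub_mul_sum_range_mul_pow z p
  rw [hgeom, hz] at hweighted
  simp only [sub_mul, mul_assoc, sum_sub_distrib, ← mul_sum, hgeom, Fintype.sum_ite_eq']
  linear_combination 2 * hweighted

lemma one_add_mul_sum_Ico_neg_one_pow_mul_pow {p : ℕ} (hp : Odd p) {w : ℂ} (hw : w ^ p = 1) :
    (1 + w) * ∑ s ∈ Ico 1 p, (-1) ^ s * w ^ s = 1 - w := by
  have h := mul_neg_geom_sum (-w) p
  rw [hp.neg_pow, hw, range_eq_Ico, sum_eq_sum_Ico_succ_bot hp.pos] at h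
  simp only [← mul_pow, neg_one_mul]
  linear_combination h

lemma IsPrimitiveRoot.sum_range_pow_mul_eq_ite {R : Type*} [CommRing R] [IsDomain R] {ζ : R}
    {p : ℕ} (hζ : IsPrimitiveRoot ζ p) (m : ℕ) :
    ∑ k ∈ range p, ζ ^ (k * m) = if p ∣ m then (p : R) else 0 := by
  simp_rw [mul_comm _ m, pow_mul]
  split_ifs with h
  · simp [(hζ.pow_eq_one_iff_dvd m).mpr h]
  · have hgeom := geom_sum_mul (ζ ^ m) p
    rw [← pow_mul, mul_comm m p, pow_mul, hζ.pow_eq_one, one_pow, sub_self] at hgeom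
    exact (mul_eq_zero.mp hgeom).resolve_right
      (sub_ne_zero.mpr ((hζ.pow_eq_one_iff_dvd m).not.mpr h))

lemma IsPrimitiveRoot.sum_range_mul_sum_pow_eq {R : Type*} [CommRing R] [IsDomain R] {ζ : R}
    {p : ℕ} [NeZero p] (hζ : IsPrimitiveRoot ζ p) (f : ZMod p → R) (g : ℕ → R) (e : ℕ → ℕ)
    (T : Finset ℕ) :
    ∑ k ∈ range p, (∑ x, f x * ζ ^ (k * x.val)) * ∑ s ∈ T, g s * ζ ^ (k * e s)
      = p * ∑ s ∈ T, g s * f (-(e s : ZMod p)) := by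
  have horth : ∀ x s, ∑ k ∈ range p, ζ ^ (k * (x.val + e s))
      = if x = -(e s : ZMod p) then (p : R) else 0 := by
    intro x s
    simp only [hζ.sum_range_pow_mul_eq_ite, ← ZMod.natCast_eq_zero_iff, Nat.cast_add,
      ZMod.natCast_zmod_val, eq_neg_iff_add_eq_zero]
  calc ∑ k ∈ range p, (∑ x, f x * ζ ^ (k * x.val)) * ∑ s ∈ T, g s * ζ ^ (k * e s)
      = ∑ s ∈ T, ∑ x, f x * g s * ∑ k ∈ range p, ζ ^ (k * (x.val + e s)) := by
        simp only [sum_mul, mul_sum]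
        rw [sum_comm]
        refine sum_congr rfl fun s _ => ?_
        rw [sum_comm]
        refine sum_congr rfl fun x _ => sum_congr rfl fun k _ => ?_
        rw [mul_add, pow_add]
        ring
    _ = p * ∑ s ∈ T, g s * f (-(e s : ZMod p)) := by
        simp only [horth, mul_ite, mul_zero, Fintype.sum_ite_eq', mul_sum]
        refine sum_congr rfl fun s _ => by ring

open Complex in
lemma cot_mul_cot_add_pi_div_two_mul_eq_sum_mul_sum {p : ℕ} [NeZero p] (hp : Odd p) {ζ : ℂ}
    (hζ : ζ = cexp (2 * π * I / p)) (b k : ℕ) (hk : ¬p ∣ k) :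
    (Real.cot (π * k / p) * Real.cot (π * b * k / p + π / 2) : ℂ) * p
      = (∑ x : ZMod p, (sawtooth x : ℂ) * ζ ^ (k * x.val))
          * ∑ s ∈ Ico 1 p, (-1) ^ s * ζ ^ (k * (b * s)) := by
  have hprim : IsPrimitiveRoot ζ p := hζ ▸ isPrimitiveRoot_exp p hp.pos.ne'
  have hexp : ∀ m : ℕ, cexp (2 * I * (π * m / p : ℝ)) = ζ ^ m := fun m => by
    rw [hζ, ← Complex.exp_nat_mul]
    push_cast
    ring_nf
  have hcot₁ : (Real.cot (π * k / p) : ℂ) = (ζ ^ k + 1) / (I * (1 - ζ ^ k)) := by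
    rw [ofReal_cot, cot_eq_exp_ratio, hexp]
  have hcot₂ : (Real.cot (π * b * k / p + π / 2) : ℂ)
      = (1 - ζ ^ (k * b)) / (I * (1 + ζ ^ (k * b))) := by
    have hshift : cexp (2 * I * ((π * b * k / p + π / 2 : ℝ) : ℂ)) = -ζ ^ (k * b) := by
      rw [← hexp (k * b), ← exp_add_pi_mul_I]
      push_cast
      ring_nf
    rw [ofReal_cot, cot_eq_exp_ratio, hshift]
    ring
  have hz : (ζ ^ k) ^ p = 1 := by rw [← pow_mul, mul_comm, pow_mul, hprim.pow_eq_one, one_pow]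
  have hw : (ζ ^ (k * b)) ^ p = 1 := by
    rw [← pow_mul, mul_comm, pow_mul, hprim.pow_eq_one, one_pow]
  have hz1 : ζ ^ k ≠ 1 := (hprim.pow_eq_one_iff_dvd k).not.mpr hk
  have hw1 : 1 + ζ ^ (k * b) ≠ 0 := by
    intro h
    rw [← neg_eq_of_add_eq_zero_right h, hp.neg_pow, one_pow] at hw
    norm_num at hw
  have hA := one_sub_mul_sum_sawtooth_mul_pow hz hz1
  have hB := one_add_mul_sum_Ico_neg_one_pow_mul_pow hp hw
  rw [hcot₁, hcot₂]
  simp only [pow_mul] at hA hB hw1 ⊢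
  generalize (∑ x : ZMod p, (sawtooth x : ℂ) * (ζ ^ k) ^ x.val) = A at hA ⊢
  generalize (∑ s ∈ Ico 1 p, (-1 : ℂ) ^ s * ((ζ ^ k) ^ b) ^ s) = B at hB ⊢
  generalize ζ ^ k = z at *
  have hz1' : 1 - z ≠ 0 := sub_ne_zero.mpr hz1.symm
  field_simp
  linear_combination
    (1 + z ^ b) * B * hA - p * (1 + z) * hB - (1 - z) * A * (1 + z ^ b) * B * I_sq

open Complex in
theorem sum_Ico_cot_mul_cot_add_pi_div_two {p : ℕ} [NeZero p] (hp : Odd p) (b : ℕ) :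
    ∑ k ∈ Ico 1 p, Real.cot (π * k / p) * Real.cot (π * b * k / p + π / 2)
      = ∑ s ∈ Ico 1 p, (-1) ^ s * (sawtooth (-(b * s : ZMod p)) : ℝ) := by
  set ζ := cexp (2 * π * I / p) with hζ
  have hprim : IsPrimitiveRoot ζ p := isPrimitiveRoot_exp p (NeZero.ne p)
  have hp0 : (p : ℂ) ≠ 0 := Nat.cast_ne_zero.mpr (NeZero.ne p)
  set F : ℕ → ℂ := fun k => (∑ x : ZMod p, (sawtooth x : ℂ) * ζ ^ (k * x.val))
    * ∑ s ∈ Ico 1 p, (-1) ^ s * ζ ^ (k * (b * s)) with hF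
  have hF0 : F 0 = 0 := by
    have h : ∑ s ∈ Ico 1 p, (-1 : ℂ) ^ s = 0 := by
      simpa using one_add_mul_sum_Ico_neg_one_pow_mul_pow hp (one_pow p)
    simp [hF, h]
  apply ofReal_injective
  simp only [ofReal_sum, ofReal_mul, ofReal_pow, ofReal_neg, ofReal_one, ofReal_intCast]
  calc ∑ k ∈ Ico 1 p, (Real.cot (π * k / p) * Real.cot (π * b * k / p + π / 2) : ℂ)
      = ∑ k ∈ Ico 1 p, F k / p := sum_congr rfl fun k hk => by
        rw [mem_Ico] at hk
        exact eq_div_of_mul_eq hp0 <| cot_mul_cot_add_pi_div_two_mul_eq_sum_mul_sum hp hζ b k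
          (Nat.not_dvd_of_pos_of_lt hk.1 hk.2)
    _ = (∑ k ∈ range p, F k) / p := by
        rw [← sum_div, range_eq_Ico, sum_eq_sum_Ico_succ_bot hp.pos, hF0, zero_add]
    _ = ∑ s ∈ Ico 1 p, (-1) ^ s * (sawtooth (-(b * s : ZMod p)) : ℂ) := by
        rw [hF, hprim.sum_range_mul_sum_pow_eq _ (fun s => (-1) ^ s) (fun s => b * s)]
        push_cast
        field_simp

lemma sawtooth_natCast_mul_six_mul_add {n c j : ℕ} (hc : c < n) (hj : j < 6) :
    sawtooth ((n * (6 * c + 1 + j) : ℕ) : ZMod (6 * n + 1))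
      = 2 * ((n : ℤ) * (j + 1) - c) - (6 * n + 1) := by
  have hn : n ≤ n * (j + 1) := Nat.le_mul_of_pos_right n j.succ_pos
  have hle : c ≤ n * (j + 1) := hc.le.trans hn
  have hlt : n * (j + 1) - c < 6 * n + 1 := by
    have : n * (j + 1) ≤ n * 6 := Nat.mul_le_mul_left n hj
    omega
  have hval : ((n * (6 * c + 1 + j) : ℕ) : ZMod (6 * n + 1)).val = n * (j + 1) - c := by
    rw [ZMod.val_natCast, show n * (6 * c + 1 + j) = (n * (j + 1) - c) + c * (6 * n + 1) by
      zify [hle]; ring, Nat.add_mul_mod_self_right, Nat.mod_eq_of_lt hlt]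
  have hne : ((n * (6 * c + 1 + j) : ℕ) : ZMod (6 * n + 1)) ≠ 0 := by
    rw [← ZMod.val_ne_zero, hval]
    omega
  rw [sawtooth, if_neg hne, hval]
  push_cast [hle]
  ring

lemma sum_range_six_neg_one_pow_mul_sawtooth {n c : ℕ} (hc : c < n) :
    ∑ j ∈ range 6, (-1) ^ (6 * c + 1 + j)
        * sawtooth ((n * (6 * c + 1 + j) : ℕ) : ZMod (6 * n + 1)) = 6 * n := by
  have hsign : (-1 : ℤ) ^ (6 * c) = 1 := by rw [pow_mul]; norm_num
  rw [sum_congr rfl fun j hj => by rw [sawtooth_natCast_mul_six_mul_add hc (mem_range.mp hj)]]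
  simp only [sum_range_succ, sum_range_zero, pow_add, hsign]
  ring

lemma sum_Ico_neg_one_pow_mul_sawtooth_natCast_mul (n : ℕ) :
    ∑ s ∈ Ico 1 (6 * n + 1), (-1) ^ s * sawtooth ((n * s : ℕ) : ZMod (6 * n + 1))
      = 6 * n ^ 2 := by
  have hblocks : ∀ m ≤ n, ∑ s ∈ Ico 1 (6 * m + 1),
      (-1) ^ s * sawtooth ((n * s : ℕ) : ZMod (6 * n + 1)) = 6 * n * m := by
    intro m
    induction m with
    | zero => simp
    | succ m ih =>
      intro hm
      rw [show 6 * (m + 1) + 1 = 6 * m + 1 + 6 by ring,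
        ← sum_Ico_consecutive _ (by omega : 1 ≤ 6 * m + 1) (by omega : 6 * m + 1 ≤ 6 * m + 1 + 6),
        ih (by omega), sum_Ico_eq_sum_range, add_tsub_cancel_left,
        sum_range_six_neg_one_pow_mul_sawtooth hm]
      push_cast
      ring
  rw [hblocks n le_rfl]
  ring

theorem dedekind_cotangent_sum_eval_general (n : ℕ) :
    (2 / (6 * n + 1 : ℝ)) * ∑ k ∈ Finset.Icc 1 (6 * n),
        Real.cot (Real.pi * k / (6 * n + 1)) *
          Real.cot (Real.pi * (5 * n + 1) * k / (6 * n + 1) + Real.pi / 2) =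
      2 * ((n : ℝ) - 1 + (5 * n + 1) / (6 * n + 1)) := by
  have hneg : ∀ s : ℕ,
      -(((5 * n + 1 : ℕ) : ZMod (6 * n + 1)) * s) = ((n * s : ℕ) : ZMod (6 * n + 1)) := by
    intro s
    have h := ZMod.natCast_self (6 * n + 1)
    push_cast at h ⊢
    linear_combination (-s : ZMod (6 * n + 1)) * h
  have hsum := sum_Ico_cot_mul_cot_add_pi_div_two (p := 6 * n + 1) ⟨3 * n, by ring⟩ (5 * n + 1)
  simp only [hneg] at hsum
  have hS : ∑ k ∈ Icc 1 (6 * n),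
      cot (π * k / (6 * n + 1)) * cot (π * (5 * n + 1) * k / (6 * n + 1) + π / 2) = 6 * n ^ 2 := by
    rw [← Ico_add_one_right_eq_Icc]
    push_cast at hsum
    rw [hsum]
    exact_mod_cast sum_Ico_neg_one_pow_mul_sawtooth_natCast_mul n
  rw [hS]
  field_simp
  ring

theorem dedekind_cotangent_sum_eval (n : ℕ) (hn : 0 < n) :
    (2 / (6 * n + 1 : ℝ)) * ∑ k ∈ Finset.Icc 1 (6 * n),
        Real.cot (Real.pi * k / (6 * n + 1)) *
          Real.cot (Real.pi * (5 * n + 1) * k / (6 * n + 1) + Real.pi / 2) =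
      2 * ((n : ℝ) - 1 + (5 * n + 1) / (6 * n + 1)) :=
  dedekind_cotangent_sum_eval_general n
end
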